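/- For every Nim position (x₁,…,xₙ) of non-negative integers, the StrNim game on the string c₁^{x₁} c₂^{x₂} ··· cₙ^{xₙ}, with pairwise distinct characters cᵢ, is a P-position if and only if x₁ ⊕ x₂ ⊕ ··· ⊕ xₙ = 0, where ⊕ is bitwise XOR. -/

import Mathlib

/-- A move in StrNim: remove a nonempty contiguous block of a single repeated character. -/
def StrMove {α : Type*} (s t : List α) : Prop :=
  ∃ (x : List α) (c : α) (k : ℕ) (y : List α),
    1 ≤ k ∧ s = x ++ List.replicate k c ++ y ∧ t = x ++ y

/-- N-positions of StrNim: there is a move to a position all of whose successors are N-positions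
(i.e. a move to a P-position). -/
inductive NPos {α : Type*} : List α → Prop where
  | intro {s t : List α} (h : StrMove s t) (ht : ∀ u, StrMove t u → NPos u) : NPos s

/-- P-positions of StrNim: every successor is an N-position. -/
def PPos {α : Type*} (s : List α) : Prop := ∀ t, StrMove s t → NPos t

/-! Since the characters are distinct, a move on `c₁^{x₁} ⋯ cₙ^{xₙ}` can only shorten one of the
blocks, so the game is Nim on the heaps `xᵢ`. A Nim move changes exactly one heap and hence the
nim-sum, while from nim-sum `s` every value `a < s` is reachable by a single move (`Nat.lt_xor_cases`,
heap by heap). So the positions of nim-sum zero form a kernel of the move relation, and since moves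
shorten the string, a kernel consists exactly of the P-positions. -/

section

open List

variable {α : Type*}

theorem StrMove.length_lt {s t : List α} (h : StrMove s t) : t.length < s.length := by
  obtain ⟨x, c, k, y, hk, rfl, rfl⟩ := h
  simp only [length_append, length_replicate]
  omega

theorem NPos.not_pPos {s : List α} (h : NPos s) : ¬ PPos s := by
  induction h with
  | intro hst _ ih =>
    intro hs
    obtain ⟨htu, hu⟩ := hs _ hst
    exact ih _ htu hu

theorem pPos_iff_of_kernel {β : Type*} (w : β → List α) (R : β → β → Prop)
    (hw : ∀ b t, StrMove (w b) t ↔ ∃ b', R b b' ∧ w b' = t) (K : β → Prop)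
    (hK : ∀ b b', R b b' → K b → ¬ K b') (hnK : ∀ b, ¬ K b → ∃ b', R b b' ∧ K b') (b : β) :
    PPos (w b) ↔ K b := by
  have key (b : β) : (K b → PPos (w b)) ∧ (¬ K b → NPos (w b)) := by
    induction hn : (w b).length using Nat.strong_induction_on generalizing b with
    | _ n ih =>
      subst hn
      refine ⟨fun hb t ht => ?_, fun hb => ?_⟩
      · obtain ⟨b', hbb', rfl⟩ := (hw b t).1 ht
        exact (ih _ ht.length_lt b' rfl).2 (hK b b' hbb' hb)
      · obtain ⟨b', hbb', hb'⟩ := hnK b hb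
        have hmove : StrMove (w b) (w b') := (hw b _).2 ⟨b', hbb', rfl⟩
        exact .intro hmove ((ih _ hmove.length_lt b' rfl).1 hb')
  exact ⟨fun h => by_contra fun hb => ((key b).2 hb).not_pPos h, (key b).1⟩

theorem replicate_append_eq_replicate_append {c d : α} {m i : ℕ} {y r : List α} (hc : c ∉ r)
    (hm : m ≠ 0) (hi : i ≠ 0) (h : replicate m d ++ y = replicate i c ++ r) :
    d = c ∧ m ≤ i ∧ y = replicate (i - m) c ++ r := by
  have hdc : d = c := by
    obtain ⟨m, rfl⟩ := Nat.exists_eq_succ_of_ne_zero hm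
    obtain ⟨i, rfl⟩ := Nat.exists_eq_succ_of_ne_zero hi
    simpa [replicate_succ] using congrArg head? h
  subst hdc
  rcases append_eq_append_iff.1 h with ⟨a, ha, rfl⟩ | ⟨b, hb, rfl⟩
  · obtain ⟨hlen, -, ha⟩ := replicate_eq_append_iff.1 ha
    simp only [length_replicate] at hlen
    exact ⟨rfl, by omega, by rw [ha]; congr 2; omega⟩
  · obtain ⟨hlen, -, hb⟩ := replicate_eq_append_iff.1 hb
    obtain rfl : b = [] := eq_nil_iff_forall_not_mem.2 fun e he =>
      hc (mem_append_left _ (eq_of_mem_replicate (hb ▸ he) ▸ he))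
    simp only [length_replicate, length_nil] at hlen
    exact ⟨rfl, by omega, by simp [show i - m = 0 by omega]⟩

theorem append_replicate_append_eq_replicate_append {c d : α} {m k : ℕ} {x y r : List α}
    (hc : c ∉ r) (hm : m ≠ 0) (h : x ++ replicate m d ++ y = replicate k c ++ r) :
    (d = c ∧ m ≤ k ∧ x ++ y = replicate (k - m) c ++ r) ∨
      ∃ x', x = replicate k c ++ x' ∧ r = x' ++ replicate m d ++ y := by
  rw [append_assoc] at h
  rcases append_eq_append_iff.1 h with ⟨a, ha, h⟩ | ⟨x', rfl, rfl⟩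
  · obtain ⟨hlen, hx, ha⟩ := replicate_eq_append_iff.1 ha
    rcases eq_or_ne a.length 0 with ha0 | ha0
    · rw [length_eq_zero_iff.1 ha0, nil_append] at h
      refine .inr ⟨[], ?_, by simp [h]⟩
      rw [hx, append_nil]
      congr
      omega
    · rw [ha] at h
      obtain ⟨rfl, hma, rfl⟩ := replicate_append_eq_replicate_append hc hm ha0 h
      refine .inl ⟨rfl, by omega, ?_⟩
      rw [hx, ← append_assoc, replicate_append_replicate]
      congr 2
      omega
  · exact .inr ⟨x', rfl, by simp⟩

theorem strMove_replicate_append_iff {c : α} {k : ℕ} {r t : List α} (hc : c ∉ r) :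
    StrMove (replicate k c ++ r) t ↔
      (∃ j < k, t = replicate j c ++ r) ∨ ∃ r', StrMove r r' ∧ t = replicate k c ++ r' := by
  constructor
  · rintro ⟨x, d, m, y, hm, hs, rfl⟩
    rcases append_replicate_append_eq_replicate_append hc (by omega) hs.symm with
      ⟨-, hmk, h⟩ | ⟨x', rfl, rfl⟩
    · exact .inl ⟨k - m, by omega, h⟩
    · exact .inr ⟨x' ++ y, ⟨x', d, m, y, hm, rfl, rfl⟩, by simp⟩
  · rintro (⟨j, hj, rfl⟩ | ⟨r', ⟨x, d, m, y, hm, rfl, rfl⟩, rfl⟩)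
    · refine ⟨[], c, k - j, replicate j c ++ r, by omega, ?_, rfl⟩
      rw [nil_append, ← append_assoc, replicate_append_replicate]
      congr 2
      omega
    · exact ⟨replicate k c ++ x, d, m, y, hm, by simp, by simp⟩

def blocks (L : List (ℕ × α)) : List α := L.flatMap fun p => replicate p.1 p.2

@[simp] theorem blocks_nil : blocks ([] : List (ℕ × α)) = [] := rfl

@[simp] theorem blocks_cons (k : ℕ) (c : α) (L : List (ℕ × α)) :
    blocks ((k, c) :: L) = replicate k c ++ blocks L := rfl

theorem not_mem_blocks {c : α} {L : List (ℕ × α)} (hc : c ∉ L.map Prod.snd) : c ∉ blocks L := by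
  simp only [blocks, mem_flatMap, mem_replicate, mem_map, not_exists, not_and] at hc ⊢
  rintro ⟨k, d⟩ hkd - rfl
  exact hc _ hkd rfl

inductive NimMove : List (ℕ × α) → List (ℕ × α) → Prop
  | head {k j : ℕ} {c : α} {L : List (ℕ × α)} : j < k → NimMove ((k, c) :: L) ((j, c) :: L)
  | tail (p : ℕ × α) {L L' : List (ℕ × α)} : NimMove L L' → NimMove (p :: L) (p :: L')

theorem NimMove.map_snd_eq {L L' : List (ℕ × α)} (h : NimMove L L') :
    L'.map Prod.snd = L.map Prod.snd := by
  induction h with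
  | head => rfl
  | tail p _ ih => rw [map_cons, map_cons, ih]

theorem strMove_blocks_iff {L : List (ℕ × α)} (hL : (L.map Prod.snd).Nodup) {t : List α} :
    StrMove (blocks L) t ↔ ∃ L', NimMove L L' ∧ blocks L' = t := by
  induction L generalizing t with
  | nil =>
    refine iff_of_false (fun h => by simpa using h.length_lt) ?_
    rintro ⟨L', h, -⟩
    cases h
  | cons p L ih =>
    obtain ⟨k, c⟩ := p
    rw [map_cons, nodup_cons] at hL
    rw [blocks_cons, strMove_replicate_append_iff (not_mem_blocks hL.1)]
    constructor
    · rintro (⟨j, hj, rfl⟩ | ⟨r', hr', rfl⟩)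
      · exact ⟨(j, c) :: L, .head hj, rfl⟩
      · obtain ⟨L', hL', rfl⟩ := (ih hL.2).1 hr'
        exact ⟨(k, c) :: L', .tail _ hL', rfl⟩
    · rintro ⟨L', h, rfl⟩
      cases h with
      | head hj => exact .inl ⟨_, hj, rfl⟩
      | tail _ h => exact .inr ⟨_, (ih hL.2).2 ⟨_, h, rfl⟩, rfl⟩

def nimSum (l : List ℕ) : ℕ := l.foldr (· ^^^ ·) 0

@[simp] theorem nimSum_cons (a : ℕ) (l : List ℕ) : nimSum (a :: l) = a ^^^ nimSum l := rfl

theorem NimMove.nimSum_ne {L L' : List (ℕ × α)} (h : NimMove L L') :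
    nimSum (L'.map Prod.fst) ≠ nimSum (L.map Prod.fst) := by
  induction h with
  | head hj => simpa using hj.ne
  | tail p _ ih => simpa using ih

theorem exists_nimMove_nimSum_eq {L : List (ℕ × α)} {a : ℕ} (ha : a < nimSum (L.map Prod.fst)) :
    ∃ L', NimMove L L' ∧ nimSum (L'.map Prod.fst) = a := by
  induction L generalizing a with
  | nil => simp [nimSum] at ha
  | cons p L ih =>
    obtain ⟨k, c⟩ := p
    rw [map_cons, nimSum_cons] at ha
    rcases Nat.lt_xor_cases ha with h | h
    · exact ⟨(a ^^^ nimSum (L.map Prod.fst), c) :: L, .head h, by simp⟩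
    · obtain ⟨L', hL', hsum⟩ := ih h
      exact ⟨(k, c) :: L', .tail _ hL', by simp [hsum]⟩

theorem pPos_blocks_iff {L : List (ℕ × α)} (hL : (L.map Prod.snd).Nodup) :
    PPos (blocks L) ↔ nimSum (L.map Prod.fst) = 0 := by
  let Pos := {L : List (ℕ × α) // (L.map Prod.snd).Nodup}
  have lift {b : Pos} {L' : List (ℕ × α)} (h : NimMove b.1 L') : ∃ b' : Pos, b'.1 = L' :=
    ⟨⟨L', h.map_snd_eq ▸ b.2⟩, rfl⟩
  refine pPos_iff_of_kernel (fun b : Pos => blocks b.1) (fun b b' => NimMove b.1 b'.1)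
    (fun b t => ?_) (fun b => nimSum (b.1.map Prod.fst) = 0)
    (fun b b' h hb hb' => h.nimSum_ne (hb'.trans hb.symm)) (fun b hb => ?_) ⟨L, hL⟩
  · rw [strMove_blocks_iff b.2]
    constructor
    · rintro ⟨L', h, rfl⟩
      obtain ⟨b', rfl⟩ := lift h
      exact ⟨b', h, rfl⟩
    · rintro ⟨b', h, rfl⟩
      exact ⟨b'.1, h, rfl⟩
  · obtain ⟨L', h, h0⟩ := exists_nimMove_nimSum_eq (Nat.pos_of_ne_zero hb)
    obtain ⟨b', rfl⟩ := lift h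
    exact ⟨b', h, h0⟩

end

/-- For a Nim position `(x₁, …, xₙ)` and pairwise distinct characters `cᵢ`, the StrNim game on
`c₁^{x₁} ⋯ cₙ^{xₙ}` is a P-position iff `x₁ ⊕ ⋯ ⊕ xₙ = 0` (bitwise XOR). -/
theorem stmt_19 {α : Type*} (n : ℕ) (x : Fin n → ℕ) (c : Fin n → α)
    (hc : Function.Injective c) :
    PPos ((List.ofFn fun i => List.replicate (x i) (c i)).flatten) ↔
      (List.ofFn x).foldr (· ^^^ ·) 0 = 0 := by
  have hnodup : ((List.ofFn fun i => (x i, c i)).map Prod.snd).Nodup := by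
    simpa [List.map_ofFn, Function.comp_def] using List.nodup_ofFn.2 hc
  simpa only [blocks, nimSum, List.map_ofFn, Function.comp_def, List.flatMap_def]
    using pPos_blocks_iff hnodup
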